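/- arXiv:2508.02943 — 3 statements merged into one kernel-verified Lean document; each statement's English description precedes it below -/
import Mathlib

section
/- Let R be a seminormed commutative ring and s ∈ R. Suppose b₁ + a₁·s = m₁ + e₁ and b₂ + a₂·s = m₂ + e₂ with ‖e₁‖ ≤ B₁, ‖e₂‖ ≤ B₂, ‖m₁‖ ≤ B, ‖m₂‖ ≤ B, and suppose b₀ + a₀·s = s² + e_ev with ‖e_ev‖ ≤ E and ‖a₁·a₂‖ ≤ D, for nonnegative reals B₁, B₂, B, D, E. Define w = (b₁·b₂ + (a₁·a₂)·b₀) + (a₁·b₂ + a₂·b₁ + (a₁·a₂)·a₀)·s. Then w = m₁·m₂ + e_mult where e_mult = m₁·e₂ + m₂·e₁ + e₁·e₂ + (a₁·a₂)·e_ev, and ‖e_mult‖ ≤ B·B₂ + B·B₁ + B₁·B₂ + D·E. -/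
/- The left side equals `(b₁ + a₁s)(b₂ + a₂s) + a₁a₂((b₀ + a₀s) - s²)`: relinearization
replaces the `a₁a₂s²` term of the product by `a₁a₂` times the decryption of the evaluation key. -/
theorem decrypt_relin_mul_eq {R : Type*} [CommRing R] {s b₁ a₁ m₁ e₁ b₂ a₂ m₂ e₂ b₀ a₀ e_ev : R}
    (h₁ : b₁ + a₁ * s = m₁ + e₁) (h₂ : b₂ + a₂ * s = m₂ + e₂)
    (hevk : b₀ + a₀ * s = s ^ 2 + e_ev) :
    (b₁ * b₂ + (a₁ * a₂) * b₀) + (a₁ * b₂ + a₂ * b₁ + (a₁ * a₂) * a₀) * s =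
      m₁ * m₂ + (m₁ * e₂ + m₂ * e₁ + e₁ * e₂ + (a₁ * a₂) * e_ev) := by
  linear_combination (b₂ + a₂ * s) * h₁ + (m₁ + e₁) * h₂ + (a₁ * a₂) * hevk

theorem binary_ckks_mult_noise_general (R : Type*) [SeminormedCommRing R]
    (s b₁ a₁ m₁ e₁ b₂ a₂ m₂ e₂ b₀ a₀ e_ev : R)
    (B₁ B₂ B D E : ℝ)
    (h₁ : b₁ + a₁ * s = m₁ + e₁) (h₂ : b₂ + a₂ * s = m₂ + e₂)
    (hB₁ : ‖e₁‖ ≤ B₁) (hB₂ : ‖e₂‖ ≤ B₂)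
    (hm₁ : ‖m₁‖ ≤ B) (hm₂ : ‖m₂‖ ≤ B)
    (hevk : b₀ + a₀ * s = s ^ 2 + e_ev)
    (hE : ‖e_ev‖ ≤ E) (hD : ‖a₁ * a₂‖ ≤ D)
    (w : R)
    (hw : w = (b₁ * b₂ + (a₁ * a₂) * b₀) + (a₁ * b₂ + a₂ * b₁ + (a₁ * a₂) * a₀) * s) :
    w = m₁ * m₂ + (m₁ * e₂ + m₂ * e₁ + e₁ * e₂ + (a₁ * a₂) * e_ev) ∧
    ‖m₁ * e₂ + m₂ * e₁ + e₁ * e₂ + (a₁ * a₂) * e_ev‖ ≤ B * B₂ + B * B₁ + B₁ * B₂ + D * E :=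
  ⟨hw.trans (decrypt_relin_mul_eq h₁ h₂ hevk),
    norm_add_le_of_le
      (norm_add_le_of_le
        (norm_add_le_of_le (norm_mul_le_of_le hm₁ hB₂) (norm_mul_le_of_le hm₂ hB₁))
        (norm_mul_le_of_le hB₁ hB₂))
      (norm_mul_le_of_le hD hE)⟩

/-- Multiplication noise bound for Binary CKKS: the relinearized product
decrypts to `m₁·m₂` plus a noise term bounded by `B·B₂ + B·B₁ + B₁·B₂ + D·E`. -/
theorem binary_ckks_mult_noise (R : Type*) [SeminormedCommRing R]
    (s b₁ a₁ m₁ e₁ b₂ a₂ m₂ e₂ b₀ a₀ e_ev : R)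
    (B₁ B₂ B D E : ℝ)
    (hB₁' : 0 ≤ B₁) (hB₂' : 0 ≤ B₂) (hB' : 0 ≤ B) (hD' : 0 ≤ D) (hE' : 0 ≤ E)
    (h₁ : b₁ + a₁ * s = m₁ + e₁) (h₂ : b₂ + a₂ * s = m₂ + e₂)
    (hB₁ : ‖e₁‖ ≤ B₁) (hB₂ : ‖e₂‖ ≤ B₂)
    (hm₁ : ‖m₁‖ ≤ B) (hm₂ : ‖m₂‖ ≤ B)
    (hevk : b₀ + a₀ * s = s ^ 2 + e_ev)
    (hE : ‖e_ev‖ ≤ E) (hD : ‖a₁ * a₂‖ ≤ D)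
    (w : R)
    (hw : w = (b₁ * b₂ + (a₁ * a₂) * b₀) + (a₁ * b₂ + a₂ * b₁ + (a₁ * a₂) * a₀) * s) :
    w = m₁ * m₂ + (m₁ * e₂ + m₂ * e₁ + e₁ * e₂ + (a₁ * a₂) * e_ev) ∧
    ‖m₁ * e₂ + m₂ * e₁ + e₁ * e₂ + (a₁ * a₂) * e_ev‖ ≤ B * B₂ + B * B₁ + B₁ * B₂ + D * E :=
  binary_ckks_mult_noise_general R s b₁ a₁ m₁ e₁ b₂ a₂ m₂ e₂ b₀ a₀ e_ev B₁ B₂ B D E h₁ h₂ hB₁ hB₂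
    hm₁ hm₂ hevk hE hD w hw
end

section
/- Let h, σ, N, q, B_enc, Δ, P be real numbers with h ≥ 0, σ ≥ 0, N ≥ 0, q ≥ 0, P > 0, B_enc > 0. If Δ > 4·h + h·B_enc + 6·σ·N / B_enc, then B_enc² + 2·B_enc·(Δ/2 + h) + h·B_enc² + 2·h·B_enc + 6·σ·N < 2·Δ·B_enc + B_enc² + (8·σ·N / (√3 · P))·q + N + (8/3)·√h. In other words, the Binary CKKS worst-case multiplicative noise bound B_mult^bin = B₁B₂ + (B₁+B₂)(B+h) + hB₁B₂ + h(B₁+B₂) + 6σN is strictly smaller than the standard CKKS bound B_mult^std = ν₁B₂ + ν₂B₁ + B₁B₂ + P⁻¹·q·8σN/√3 + N + (8/3)√h, when instantiated with B₁ = B₂ = B_enc, ν₁ = ν₂ = Δ, and B = Δ/2. -/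
theorem mul_add_lt_mul_of_add_div_lt {K : Type*} [Field K] [LinearOrder K] [IsStrictOrderedRing K]
    {a c d b : K} (hb : 0 < b) (h : c + d / b < a) : c * b + d < a * b := by
  rwa [← div_lt_iff₀ hb, add_div, mul_div_cancel_right₀ _ hb.ne']

theorem binary_vs_standard_mult_noise_general
    (h σ N q B_enc Δ P : ℝ)
    (hσ : 0 ≤ σ) (hN : 0 ≤ N) (hq : 0 ≤ q)
    (hP : 0 < P) (hB : 0 < B_enc)
    (hΔ : Δ > 4 * h + h * B_enc + 6 * σ * N / B_enc) :
    B_enc ^ 2 + 2 * B_enc * (Δ / 2 + h) + h * B_enc ^ 2 + 2 * h * B_enc + 6 * σ * N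
      < 2 * Δ * B_enc + B_enc ^ 2 + (8 * σ * N / (Real.sqrt 3 * P)) * q + N
        + (8 / 3) * Real.sqrt h := by
  have hΔB : (4 * h + h * B_enc) * B_enc + 6 * σ * N < Δ * B_enc :=
    mul_add_lt_mul_of_add_div_lt hB hΔ
  have hrescale_nonneg : 0 ≤ 8 * σ * N / (Real.sqrt 3 * P) * q := by positivity
  -- After cancelling `B_enc ^ 2 + Δ * B_enc`, the claim is `hΔB` plus nonnegative terms.
  linear_combination hΔB + hrescale_nonneg + hN + (8 / 3 : ℝ) * Real.sqrt_nonneg h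

/-- The Binary CKKS worst-case multiplicative noise bound is strictly smaller
than the standard CKKS bound whenever `Δ > 4h + h·B_enc + 6σN/B_enc`. -/
theorem binary_vs_standard_mult_noise
    (h σ N q B_enc Δ P : ℝ)
    (hh : 0 ≤ h) (hσ : 0 ≤ σ) (hN : 0 ≤ N) (hq : 0 ≤ q)
    (hP : 0 < P) (hB : 0 < B_enc)
    (hΔ : Δ > 4 * h + h * B_enc + 6 * σ * N / B_enc) :
    B_enc ^ 2 + 2 * B_enc * (Δ / 2 + h) + h * B_enc ^ 2 + 2 * h * B_enc + 6 * σ * N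
      < 2 * Δ * B_enc + B_enc ^ 2 + (8 * σ * N / (Real.sqrt 3 * P)) * q + N
        + (8 / 3) * Real.sqrt h :=
  binary_vs_standard_mult_noise_general h σ N q B_enc Δ P hσ hN hq hP hB hΔ
end

section
/- Let a : ℕ → ℝ be a coefficient sequence, Q ≥ 0 and m real with |m| ≤ Q, and suppose the series ∑ |a j|·Q^j is summable. Let D : ℕ, ε ≥ 0, and assume the tail bound ∑'_{j} |a (D+1+j)|·Q^(D+1+j) ≤ ε. Let B_enc ≥ 0 and let y : ℕ → ℝ satisfy |y j − m^j| ≤ B_enc for all j ≤ D (approximately computed powers). Then the series f(m) = ∑'_{j} a j · m^j converges, and |∑_{j=0}^{D} a j · y j − f(m)| ≤ (∑_{j=0}^{D} |a j|) · B_enc + ε. -/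
/-!
On `|m| ≤ Q` every term of the series is dominated by `|a j| * Q ^ j`, so the series converges
absolutely. Splitting it after degree `D`, the error of the computed sum is the sum of the
per-power errors weighted by `|a j|` plus the tail of the series, which the majorant bounds by `ε`.
-/

open Finset

lemma abs_mul_pow_le_of_abs_le {m Q : ℝ} (hm : |m| ≤ Q) (c : ℝ) (j : ℕ) :
    |c * m ^ j| ≤ |c| * Q ^ j := by
  rw [abs_mul, abs_pow]
  exact mul_le_mul_of_nonneg_left (pow_le_pow_left₀ (abs_nonneg m) hm j) (abs_nonneg c)

section PowerSeries

variable {a : ℕ → ℝ} {m Q : ℝ}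

lemma summable_mul_pow_of_summable_abs_mul_pow (hm : |m| ≤ Q)
    (hsum : Summable fun j ↦ |a j| * Q ^ j) : Summable fun j ↦ a j * m ^ j :=
  hsum.of_norm_bounded fun j ↦ abs_mul_pow_le_of_abs_le hm (a j) j

lemma abs_tsum_mul_pow_nat_add_le (hm : |m| ≤ Q) (hsum : Summable fun j ↦ |a j| * Q ^ j)
    (n : ℕ) :
    |∑' j, a (j + n) * m ^ (j + n)| ≤ ∑' j, |a (n + j)| * Q ^ (n + j) := by
  simp only [add_comm n]
  exact tsum_of_norm_bounded (f := fun j ↦ a (j + n) * m ^ (j + n))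
    ((summable_nat_add_iff n).mpr hsum).hasSum fun j ↦ abs_mul_pow_le_of_abs_le hm _ _

end PowerSeries

lemma abs_sum_range_sub_tsum_le {f : ℕ → ℝ} (hf : Summable f) (c : ℕ → ℝ) (n : ℕ) :
    |∑ j ∈ range n, c j - ∑' j, f j| ≤ ∑ j ∈ range n, |c j - f j| + |∑' j, f (j + n)| := by
  rw [← hf.sum_add_tsum_nat_add n, ← sub_sub, ← sum_sub_distrib]
  exact (abs_sub _ _).trans (add_le_add_left (abs_sum_le_sum_abs _ _) _)

lemma sum_abs_mul_sub_le {a y x : ℕ → ℝ} {s : Finset ℕ} {B : ℝ}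
    (h : ∀ j ∈ s, |y j - x j| ≤ B) :
    ∑ j ∈ s, |a j * y j - a j * x j| ≤ (∑ j ∈ s, |a j|) * B := by
  rw [sum_mul]
  refine sum_le_sum fun j hj ↦ ?_
  rw [← mul_sub, abs_mul]
  exact mul_le_mul_of_nonneg_left (h j hj) (abs_nonneg _)

theorem analytic_eval_accuracy_general
    (a : ℕ → ℝ) (Q m : ℝ) (hm : |m| ≤ Q)
    (hsum : Summable (fun j : ℕ => |a j| * Q ^ j))
    (D : ℕ) (ε : ℝ)
    (htail : (∑' j : ℕ, |a (D + 1 + j)| * Q ^ (D + 1 + j)) ≤ ε)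
    (B_enc : ℝ)
    (y : ℕ → ℝ) (hy : ∀ j ≤ D, |y j - m ^ j| ≤ B_enc) :
    Summable (fun j : ℕ => a j * m ^ j) ∧
    |(∑ j ∈ Finset.range (D + 1), a j * y j) - ∑' j : ℕ, a j * m ^ j|
      ≤ (∑ j ∈ Finset.range (D + 1), |a j|) * B_enc + ε := by
  have hS := summable_mul_pow_of_summable_abs_mul_pow hm hsum
  have hpowers : ∀ j ∈ range (D + 1), |y j - m ^ j| ≤ B_enc :=
    fun j hj ↦ hy j (Nat.lt_succ_iff.mp (mem_range.mp hj))
  refine ⟨hS, (abs_sum_range_sub_tsum_le hS _ (D + 1)).trans (add_le_add ?_ ?_)⟩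
  · exact sum_abs_mul_sub_le hpowers
  · exact (abs_tsum_mul_pow_nat_add_le hm hsum (D + 1)).trans htail

/-- Accuracy of homomorphic evaluation of an analytic function: truncation at
degree `D` with tail error `ε` and per-power error `B_enc` yields total error
at most `(Σ_{j≤D} |a j|)·B_enc + ε`. -/
theorem analytic_eval_accuracy
    (a : ℕ → ℝ) (Q m : ℝ) (hQ : 0 ≤ Q) (hm : |m| ≤ Q)
    (hsum : Summable (fun j : ℕ => |a j| * Q ^ j))
    (D : ℕ) (ε : ℝ) (hε : 0 ≤ ε)
    (htail : (∑' j : ℕ, |a (D + 1 + j)| * Q ^ (D + 1 + j)) ≤ ε)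
    (B_enc : ℝ) (hB : 0 ≤ B_enc)
    (y : ℕ → ℝ) (hy : ∀ j ≤ D, |y j - m ^ j| ≤ B_enc) :
    Summable (fun j : ℕ => a j * m ^ j) ∧
    |(∑ j ∈ Finset.range (D + 1), a j * y j) - ∑' j : ℕ, a j * m ^ j|
      ≤ (∑ j ∈ Finset.range (D + 1), |a j|) * B_enc + ε :=
  analytic_eval_accuracy_general a Q m hm hsum D ε htail B_enc y hy
end
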